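/- For every c ∈ (0, 1/2), K ≥ 2, score vector g ∈ ℝ^K, and label y ∈ {1,…,K}: ℓ01c(d, y) ≤ L_CS^{ℓ01}(g, y), where d is the decision induced by g, ℓ01c(d, y) equals c if d = ®, equals 1 if d is a class different from y, and equals 0 if d = y, and L_CS^{ℓ01} is the cost-sensitive surrogate loss with the margin zero-one loss ℓ01. -/

import Mathlib

open Classical

/-! Case analysis on the decision. Any positive score `g_{y'}` with `y' ≠ y` costs `1 - c`
in the surrogate, which dominates the rejection cost `c` because `c < 1/2`; a wrong
accepted class moreover forces `g_y ≤ 0`, which costs the remaining `c`. -/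

/-- The margin zero-one loss: `ℓ01(z) = 1` if `z ≤ 0` and `0` otherwise. -/
noncomputable def mloss01 (z : ℝ) : ℝ := if z ≤ 0 then 1 else 0

/-- The cost-sensitive surrogate loss `L_CS^φ(g, y) = c·φ(g_y) + (1−c)·∑_{y'≠y} φ(−g_{y'})`. -/
noncomputable def LCS {K : ℕ} (φ : ℝ → ℝ) (c : ℝ) (g : Fin K → ℝ) (y : Fin K) : ℝ :=
  c * φ (g y) + (1 - c) * ∑ y' ∈ Finset.univ.erase y, φ (-(g y'))

/-- The decision rule induced by a score vector `g`: reject (`none`) if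
`max_y g_y ≤ 0` or if two distinct coordinates of `g` are strictly positive,
otherwise output the unique class `y` with `g_y > 0`. -/
noncomputable def decRule {K : ℕ} (g : Fin K → ℝ) : Option (Fin K) :=
  if h : ∃! y, 0 < g y then some h.choose else none

/-- The zero-one-c loss of a decision (`none` = rejection ®) against a label `y`:
`c` for rejection, `0` for the correct class, `1` for a wrong class. -/
noncomputable def loss01c {K : ℕ} (c : ℝ) (y : Fin K) : Option (Fin K) → ℝ
  | none => c
  | some z => if z = y then 0 else 1


lemma mloss01_nonneg (z : ℝ) : 0 ≤ mloss01 z := by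
  unfold mloss01; split_ifs <;> norm_num

lemma mloss01_of_nonpos {z : ℝ} (h : z ≤ 0) : mloss01 z = 1 := if_pos h

section Decision

variable {K : ℕ} {g : Fin K → ℝ}

lemma pos_and_unique_of_decRule_eq_some {z : Fin K} (h : decRule g = some z) :
    0 < g z ∧ ∀ w, 0 < g w → w = z := by
  unfold decRule at h
  split_ifs at h with hu
  cases Option.some_injective _ h
  exact hu.choose_spec

lemma exists_ne_pos_of_decRule_eq_none {y : Fin K} (h : decRule g = none) (hy : 0 < g y) :
    ∃ z ≠ y, 0 < g z := by
  unfold decRule at h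
  split_ifs at h with hu
  by_contra! hne
  exact hu ⟨y, hy, fun z hz => by_contra fun hzy => (hne z hzy).not_gt hz⟩

end Decision

section SurrogateBounds

variable {K : ℕ} {c : ℝ} {g : Fin K → ℝ} {y : Fin K}

lemma sum_mloss01_nonneg :
    0 ≤ ∑ y' ∈ Finset.univ.erase y, mloss01 (-(g y')) :=
  Finset.sum_nonneg fun _ _ => mloss01_nonneg _

lemma one_le_sum_mloss01_of_pos {z : Fin K} (hzy : z ≠ y) (hz : 0 < g z) :
    1 ≤ ∑ y' ∈ Finset.univ.erase y, mloss01 (-(g y')) := by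
  rw [← mloss01_of_nonpos (neg_nonpos.2 hz.le)]
  exact Finset.single_le_sum (f := fun y' => mloss01 (-(g y')))
    (fun _ _ => mloss01_nonneg _) (Finset.mem_erase.2 ⟨hzy, Finset.mem_univ z⟩)

lemma LCS_mloss01_nonneg (hc0 : 0 ≤ c) (hc1 : c ≤ 1) : 0 ≤ LCS mloss01 c g y :=
  add_nonneg (mul_nonneg hc0 (mloss01_nonneg _)) (mul_nonneg (by linarith) sum_mloss01_nonneg)

lemma le_LCS_mloss01_of_nonpos (hc1 : c ≤ 1) (hgy : g y ≤ 0) : c ≤ LCS mloss01 c g y := by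
  have := mul_nonneg (sub_nonneg.2 hc1) (sum_mloss01_nonneg (g := g) (y := y))
  rw [LCS, mloss01_of_nonpos hgy]
  linarith

lemma one_sub_le_LCS_mloss01_of_pos {z : Fin K} (hc0 : 0 ≤ c) (hc1 : c ≤ 1)
    (hzy : z ≠ y) (hz : 0 < g z) : 1 - c ≤ LCS mloss01 c g y := by
  have := mul_le_mul_of_nonneg_left (one_le_sum_mloss01_of_pos hzy hz) (sub_nonneg.2 hc1)
  have := mul_nonneg hc0 (mloss01_nonneg (g y))
  rw [LCS]
  linarith

lemma one_le_LCS_mloss01_of_pos {z : Fin K} (hc1 : c ≤ 1) (hgy : g y ≤ 0)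
    (hzy : z ≠ y) (hz : 0 < g z) : 1 ≤ LCS mloss01 c g y := by
  have := mul_le_mul_of_nonneg_left (one_le_sum_mloss01_of_pos hzy hz) (sub_nonneg.2 hc1)
  rw [LCS, mloss01_of_nonpos hgy]
  linarith

end SurrogateBounds

theorem stmt7_general (c : ℝ) (hc0 : 0 < c) (hc : c < 1/2) (K : ℕ)
    (g : Fin K → ℝ) (y : Fin K) :
    loss01c c y (decRule g) ≤ LCS mloss01 c g y := by
  have hc1 : c ≤ 1 := by linarith
  rcases hd : decRule g with _ | z
  · by_cases hgy : g y ≤ 0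
    · exact le_LCS_mloss01_of_nonpos hc1 hgy
    · obtain ⟨z, hzy, hz⟩ := exists_ne_pos_of_decRule_eq_none hd (not_le.1 hgy)
      calc c ≤ 1 - c := by linarith
        _ ≤ LCS mloss01 c g y := one_sub_le_LCS_mloss01_of_pos hc0.le hc1 hzy hz
  · obtain ⟨hz, hunique⟩ := pos_and_unique_of_decRule_eq_some hd
    by_cases hzy : z = y
    · simpa [loss01c, hzy] using LCS_mloss01_nonneg hc0.le hc1
    · have hgy : g y ≤ 0 := not_lt.1 fun h => hzy (hunique y h).symm
      simpa [loss01c, hzy] using one_le_LCS_mloss01_of_pos hc1 hgy hzy hz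

/-- The zero-one-c loss of the decision induced by `g` is bounded by the
cost-sensitive surrogate loss with the margin zero-one loss:
`ℓ01c(d, y) ≤ L_CS^{ℓ01}(g, y)`. -/
theorem stmt7 (c : ℝ) (hc0 : 0 < c) (hc : c < 1/2) (K : ℕ) (hK : 2 ≤ K)
    (g : Fin K → ℝ) (y : Fin K) :
    loss01c c y (decRule g) ≤ LCS mloss01 c g y :=
  stmt7_general c hc0 hc K g y
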